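/- Let b be an even positive integer and G = ⟨v₁, v₂, h | [v₁,h], [v₂,h], [v₁,v₂]h^{-b}⟩. Let φ : G → ℤ/2 be the homomorphism with φ(v₁) = φ(v₂) = 0 and φ(h) = 1 (well-defined since b is even). Then ker φ is isomorphic to ⟨w₁, w₂, k | [w₁,k], [w₂,k], [w₁,w₂]k^{-b/2}⟩, the fundamental group of M_T(b/2). -/

import Mathlib

/-!
`⟨v₁, v₂, h | [v₁,h], [v₂,h], [v₁,v₂]h^{-c}⟩` is the integral Heisenberg-type group on `ℤ³` with
`(x,y,z)(x',y',z') = (x+x', y+y', z+z'+c·x·y')`: the presentation maps onto it, and conversely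
`(x,y,z) ↦ v₂^y v₁^x h^z` is a homomorphism back, because the relations give
`v₁^x v₂^y = v₂^y v₁^x h^{cxy}`. In this model `φ` is `z mod 2`, and for `b = 2c` the map
`(x,y,z) ↦ (x,y,2z)` from the model with parameter `c` is an isomorphism onto `{z even}`.
-/

/-- Relations of the fundamental group of `M_T(b)`:
generators `v₁ = 0`, `v₂ = 1`, `h = 2`; relations `[v₁,h]`, `[v₂,h]`, `[v₁,v₂]h^{-b}`. -/
def relsT (b : ℤ) : Set (FreeGroup (Fin 3)) :=
  { .of 0 * .of 2 * (.of 0)⁻¹ * (.of 2)⁻¹,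
    .of 1 * .of 2 * (.of 1)⁻¹ * (.of 2)⁻¹,
    .of 0 * .of 1 * (.of 0)⁻¹ * (.of 1)⁻¹ * (.of 2) ^ (-b) }

open scoped commutatorElement

section Commutator
variable {G : Type*} [Group G] {a b k : G}

theorem zpow_mul_eq_mul_zpow_mul_zpow (hak : Commute a k) (hab : a * b = b * a * k) (x : ℤ) :
    a ^ x * b = b * a ^ x * k ^ x := by
  have hconj : b⁻¹ * a * b = a * k := by
    rw [mul_assoc, hab]; group
  have := conj_zpow (a := b⁻¹) (b := a) (i := x)
  rw [inv_inv, hconj, hak.mul_zpow] at this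
  rw [mul_assoc b, this]; group

theorem mul_zpow_eq_zpow_mul_mul_zpow (hak : Commute a k) (hbk : Commute b k)
    (hab : a * b = b * a * k) (y : ℤ) : a * b ^ y = b ^ y * a * k ^ y := by
  have hconj : a * b * a⁻¹ = b * k := by
    rw [hab, mul_assoc b, hak.eq]; group
  have := conj_zpow (a := a) (b := b) (i := y)
  rw [hconj, hbk.mul_zpow] at this
  rw [mul_assoc, (hak.zpow_right y).eq, ← mul_assoc, this]; group

theorem zpow_mul_zpow_eq_of_commutatorElement_eq {h : G} {c : ℤ} (ha : Commute a h)
    (hb : Commute b h) (hab : ⁅a, b⁆ = h ^ c) (x y : ℤ) :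
    a ^ x * b ^ y = b ^ y * a ^ x * h ^ (c * x * y) := by
  have hab' : a * b = b * a * h ^ c := by
    calc a * b = ⁅a, b⁆ * (b * a) := by rw [commutatorElement_def]; group
      _ = b * a * h ^ c := by rw [hab, ((hb.mul_left ha).zpow_right c).symm.eq]
  have hax := zpow_mul_eq_mul_zpow_mul_zpow (ha.zpow_right c) hab' x
  rw [mul_zpow_eq_zpow_mul_mul_zpow ((ha.zpow_right c).zpow_zpow x _)
    ((hb.zpow_right c).zpow_right x) hax y, ← zpow_mul, ← zpow_mul, mul_assoc c]

end Commutator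

@[ext] structure Heis (c : ℤ) where
  x : ℤ
  y : ℤ
  z : ℤ

namespace Heis
variable {c : ℤ}

instance : Mul (Heis c) := ⟨fun p q => ⟨p.x + q.x, p.y + q.y, p.z + q.z + c * p.x * q.y⟩⟩
instance : One (Heis c) := ⟨⟨0, 0, 0⟩⟩
instance : Inv (Heis c) := ⟨fun p => ⟨-p.x, -p.y, -p.z + c * p.x * p.y⟩⟩

@[simp] lemma mul_x (p q : Heis c) : (p * q).x = p.x + q.x := rfl
@[simp] lemma mul_y (p q : Heis c) : (p * q).y = p.y + q.y := rfl
@[simp] lemma mul_z (p q : Heis c) : (p * q).z = p.z + q.z + c * p.x * q.y := rfl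
@[simp] lemma one_x : (1 : Heis c).x = 0 := rfl
@[simp] lemma one_y : (1 : Heis c).y = 0 := rfl
@[simp] lemma one_z : (1 : Heis c).z = 0 := rfl
@[simp] lemma inv_x (p : Heis c) : p⁻¹.x = -p.x := rfl
@[simp] lemma inv_y (p : Heis c) : p⁻¹.y = -p.y := rfl
@[simp] lemma inv_z (p : Heis c) : p⁻¹.z = -p.z + c * p.x * p.y := rfl

instance : Group (Heis c) where
  mul_assoc p q r := by ext <;> simp <;> ring
  one_mul p := by ext <;> simp
  mul_one p := by ext <;> simp
  inv_mul_cancel p := by ext <;> simp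

lemma zpow_of_x_mul_y_eq_zero {p : Heis c} (hp : p.x * p.y = 0) (n : ℤ) :
    p ^ n = ⟨n * p.x, n * p.y, n * p.z⟩ := by
  induction n using Int.induction_on with
  | zero => ext <;> simp
  | succ n ih =>
    rw [zpow_add_one, ih]
    exact Heis.ext (by simp; ring) (by simp; ring) (by simp; linear_combination c * n * hp)
  | pred n ih =>
    rw [zpow_sub_one, ih]
    exact Heis.ext (by simp; ring) (by simp; ring) (by simp; linear_combination c * (n + 1) * hp)

def gen : Fin 3 → Heis c := ![⟨1, 0, 0⟩, ⟨0, 1, 0⟩, ⟨0, 0, 1⟩]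

lemma mk_eq_gen_zpow (x y z : ℤ) :
    (⟨x, y, z⟩ : Heis c) = gen 1 ^ y * gen 0 ^ x * gen 2 ^ z := by
  simp only [gen, Matrix.cons_val_zero, Matrix.cons_val_one, Matrix.cons_val_two,
    Matrix.head_cons, Matrix.tail_cons]
  rw [zpow_of_x_mul_y_eq_zero, zpow_of_x_mul_y_eq_zero, zpow_of_x_mul_y_eq_zero] <;>
  simp [Heis.ext_iff]

variable {G : Type*} [Group G] {a b h : G}

def lift (ha : Commute a h) (hb : Commute b h) (hab : ⁅a, b⁆ = h ^ c) : Heis c →* G where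
  toFun p := b ^ p.y * a ^ p.x * h ^ p.z
  map_one' := by simp
  map_mul' p q := by
    have key := zpow_mul_zpow_eq_of_commutatorElement_eq ha hb hab p.x q.y
    have hxy : Commute (h ^ (c * p.x * q.y)) (a ^ q.x) := (ha.zpow_left q.x).symm.zpow_left _
    have hz : Commute (b ^ q.y * a ^ q.x) (h ^ p.z) :=
      ((hb.zpow_left q.y).mul_left (ha.zpow_left q.x)).zpow_right p.z
    calc b ^ (p * q).y * a ^ (p * q).x * h ^ (p * q).z
        = b ^ p.y * b ^ q.y * a ^ p.x * (h ^ (c * p.x * q.y) * a ^ q.x) * h ^ p.z * h ^ q.z := by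
          rw [hxy.eq]; simp only [mul_x, mul_y, mul_z]; group
      _ = b ^ p.y * (a ^ p.x * b ^ q.y) * a ^ q.x * h ^ p.z * h ^ q.z := by rw [key]; group
      _ = b ^ p.y * a ^ p.x * h ^ p.z * (b ^ q.y * a ^ q.x * h ^ q.z) := by
          rw [show b ^ p.y * (a ^ p.x * b ^ q.y) * a ^ q.x * h ^ p.z * h ^ q.z =
            b ^ p.y * a ^ p.x * (b ^ q.y * a ^ q.x * h ^ p.z) * h ^ q.z by group, hz.eq]
          group

@[simp] lemma lift_apply (ha : Commute a h) (hb : Commute b h) (hab : ⁅a, b⁆ = h ^ c)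
    (p : Heis c) : lift ha hb hab p = b ^ p.y * a ^ p.x * h ^ p.z := rfl

lemma lift_gen (ha : Commute a h) (hb : Commute b h) (hab : ⁅a, b⁆ = h ^ c) (i : Fin 3) :
    lift ha hb hab (gen i) = ![a, b, h] i := by
  fin_cases i <;> simp [gen]

lemma gen_relsT : ∀ r ∈ relsT c, FreeGroup.lift (gen : Fin 3 → Heis c) r = 1 := by
  simp only [relsT, Set.mem_insert_iff, Set.mem_singleton_iff]
  rintro r (rfl | rfl | rfl) <;> simp [gen, Heis.ext_iff, zpow_of_x_mul_y_eq_zero]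

end Heis

section relsT
variable (c : ℤ)
open PresentedGroup

lemma commute_of_zero_of_two_relsT : Commute (of 0 : PresentedGroup (relsT c)) (of 2) :=
  commutatorElement_eq_one_iff_commute.mp (one_of_mem (Or.inl rfl))

lemma commute_of_one_of_two_relsT : Commute (of 1 : PresentedGroup (relsT c)) (of 2) :=
  commutatorElement_eq_one_iff_commute.mp (one_of_mem (Or.inr (Or.inl rfl)))

lemma commutatorElement_of_zero_of_one_relsT :
    ⁅(of 0 : PresentedGroup (relsT c)), (of 1 : PresentedGroup (relsT c))⁆ = of 2 ^ c := by
  have h : ⁅(of 0 : PresentedGroup (relsT c)), (of 1 : PresentedGroup (relsT c))⁆ *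
      of 2 ^ (-c) = 1 := one_of_mem (Or.inr (Or.inr rfl))
  rwa [mul_eq_one_iff_eq_inv, ← zpow_neg, neg_neg] at h

def relsTToHeis : PresentedGroup (relsT c) →* Heis c := toGroup Heis.gen_relsT

def heisToRelsT : Heis c →* PresentedGroup (relsT c) :=
  Heis.lift (commute_of_zero_of_two_relsT c) (commute_of_one_of_two_relsT c)
    (commutatorElement_of_zero_of_one_relsT c)

def relsTEquivHeis : PresentedGroup (relsT c) ≃* Heis c :=
  MonoidHom.toMulEquiv (relsTToHeis c) (heisToRelsT c)
    (PresentedGroup.ext fun i => by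
      simp only [MonoidHom.comp_apply, relsTToHeis, toGroup.of, heisToRelsT, Heis.lift_gen]
      fin_cases i <;> rfl)
    (MonoidHom.ext fun ⟨x, y, z⟩ => by
      simp only [MonoidHom.comp_apply, MonoidHom.id_apply, heisToRelsT, Heis.lift_apply, map_mul,
        map_zpow, relsTToHeis, toGroup.of]
      exact (Heis.mk_eq_gen_zpow x y z).symm)

lemma relsTEquivHeis_of (i : Fin 3) : relsTEquivHeis c (of i) = Heis.gen i :=
  toGroup.of Heis.gen_relsT

end relsT

namespace Heis
variable {c : ℤ}

def zParity : Heis (2 * c) →* Multiplicative (ZMod 2) where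
  toFun p := Multiplicative.ofAdd (p.z : ZMod 2)
  map_one' := by simp
  map_mul' p q := by
    rw [← ofAdd_add, mul_z]
    push_cast
    rw [show (2 : ZMod 2) = 0 from rfl, zero_mul, zero_mul, zero_mul, add_zero]

def doubleZ : Heis c →* Heis (2 * c) where
  toFun p := ⟨p.x, p.y, 2 * p.z⟩
  map_one' := by ext <;> simp
  map_mul' p q := by ext <;> simp; ring

lemma doubleZ_injective : Function.Injective (doubleZ (c := c)) := by
  intro p q hpq
  rw [Heis.ext_iff] at hpq ⊢
  simp only [doubleZ, MonoidHom.coe_mk, OneHom.coe_mk] at hpq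
  omega

lemma range_doubleZ : (doubleZ (c := c)).range = zParity.ker := by
  ext p
  simp only [MonoidHom.mem_range, MonoidHom.mem_ker, zParity, MonoidHom.coe_mk, OneHom.coe_mk,
    ofAdd_eq_one, ZMod.intCast_zmod_eq_zero_iff_dvd]
  constructor
  · rintro ⟨q, rfl⟩
    exact dvd_mul_right 2 q.z
  · rintro ⟨z, hz⟩
    exact ⟨⟨p.x, p.y, z⟩, by ext <;> simp [doubleZ, hz]⟩

noncomputable def kerZParityEquiv : Heis c ≃* (zParity (c := c)).ker :=
  (MonoidHom.ofInjective doubleZ_injective).trans (MulEquiv.subgroupCongr range_doubleZ)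

end Heis

theorem nonempty_ker_mulEquiv_relsT {B c : ℤ} (hB : B = 2 * c)
    (φ : PresentedGroup (relsT B) →* Multiplicative (ZMod 2))
    (h1 : φ (PresentedGroup.of 0) = 1) (h2 : φ (PresentedGroup.of 1) = 1)
    (h3 : φ (PresentedGroup.of 2) = Multiplicative.ofAdd 1) :
    Nonempty (φ.ker ≃* PresentedGroup (relsT c)) := by
  subst hB
  have hφ : φ = Heis.zParity.comp (relsTEquivHeis (2 * c) : _ →* Heis (2 * c)) := by
    refine PresentedGroup.ext fun i => ?_
    fin_cases i <;> simp [relsTEquivHeis_of, Heis.zParity, Heis.gen, h1, h2, h3]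
  subst hφ
  rw [MonoidHom.ker_comp_mulEquiv]
  exact ⟨((relsTEquivHeis _).symm.subgroupMap _).symm.trans
    (Heis.kerZParityEquiv.symm.trans (relsTEquivHeis c).symm)⟩

theorem ker_MT_cover_fibre_general (b : ℕ) (heven : Even b)
    (φ : PresentedGroup (relsT b) →* Multiplicative (ZMod 2))
    (h1 : φ (PresentedGroup.of 0) = 1) (h2 : φ (PresentedGroup.of 1) = 1)
    (h3 : φ (PresentedGroup.of 2) = Multiplicative.ofAdd 1) :
    Nonempty (φ.ker ≃* PresentedGroup (relsT (b / 2))) :=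
  nonempty_ker_mulEquiv_relsT (by obtain ⟨k, rfl⟩ := heven; push_cast; omega) φ h1 h2 h3

/-- For `b` even, the kernel of the epimorphism `π₁(M_T(b)) ↠ ℤ/2` with
`φ(v₁) = φ(v₂) = 0`, `φ(h) = 1` is the fundamental group of `M_T(b/2)`. -/
theorem ker_MT_cover_fibre (b : ℕ) (hb : 0 < b) (heven : Even b)
    (φ : PresentedGroup (relsT b) →* Multiplicative (ZMod 2))
    (h1 : φ (PresentedGroup.of 0) = 1) (h2 : φ (PresentedGroup.of 1) = 1)
    (h3 : φ (PresentedGroup.of 2) = Multiplicative.ofAdd 1) :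
    Nonempty (φ.ker ≃* PresentedGroup (relsT (b / 2))) :=
  ker_MT_cover_fibre_general b heven φ h1 h2 h3
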